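/- Let N(κ) = −κ + √(κ² + 4λ(r₀−κ)) for fixed λ, r₀ > 0 with λ < r₀, defined for κ ∈ (0, r₀). Then N''(κ) = 4λ(r₀−λ)/(κ² + 4λ(r₀−κ))^(3/2) > 0, so N is strictly convex in κ; moreover N'(κ) = (2κ−4λ)/(2√(κ²+4λ(r₀−κ))) − 1 ≤ 0, so N is nonincreasing. -/

import Mathlib

/-!
Completing the square, `κ² + 4λ(r₀ - κ) = (κ - 2λ)² + 4λ(r₀ - λ)` is a quadratic `x² + bx + c`
with negative discriminant `b² - 4c = -16λ(r₀ - λ)`. For such a quadratic `q`, `√q` has derivative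
`(2x + b) / (2√q)`, which is `< 1` because `(2x + b)² = 4q + (b² - 4c) < 4q`, and second derivative
`(4c - b²) / (4 q^{3/2}) > 0`. Hence `N = -x + √q` is strictly convex with negative derivative on
all of `ℝ`.
-/

open Real

section SqrtQuadratic

variable {b c : ℝ}

theorem quadratic_pos (hdisc : b ^ 2 < 4 * c) (x : ℝ) : 0 < x ^ 2 + b * x + c := by
  nlinarith [sq_nonneg (2 * x + b)]

theorem hasDerivAt_sqrt_quadratic {x : ℝ} (hq : x ^ 2 + b * x + c ≠ 0) :
    HasDerivAt (fun x => √(x ^ 2 + b * x + c))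
      ((2 * x + b) / (2 * √(x ^ 2 + b * x + c))) x := by
  have hpoly : HasDerivAt (fun x => x ^ 2 + b * x + c) (2 * x + b) x := by
    simpa using ((hasDerivAt_pow 2 x).add ((hasDerivAt_id x).const_mul b)).add_const c
  exact hpoly.sqrt hq

theorem hasDerivAt_deriv_sqrt_quadratic (hdisc : b ^ 2 < 4 * c) (x : ℝ) :
    HasDerivAt (fun x => (2 * x + b) / (2 * √(x ^ 2 + b * x + c)))
      ((4 * c - b ^ 2) / (4 * (x ^ 2 + b * x + c) ^ ((3 : ℝ) / 2))) x := by
  have hq := quadratic_pos hdisc x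
  have hnum : HasDerivAt (fun x => 2 * x + b) 2 x := by
    simpa using ((hasDerivAt_id x).const_mul 2).add_const b
  have hden := (hasDerivAt_sqrt_quadratic hq.ne').const_mul 2
  have hs : 0 < √(x ^ 2 + b * x + c) := sqrt_pos.2 hq
  refine (hnum.div hden (by positivity)).congr_deriv ?_
  have hpow : (x ^ 2 + b * x + c) ^ ((3 : ℝ) / 2) =
      (x ^ 2 + b * x + c) * √(x ^ 2 + b * x + c) := by
    rw [show (3 : ℝ) / 2 = 1 + 1 / 2 by norm_num, rpow_add hq, rpow_one, ← sqrt_eq_rpow]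
  have hsq : √(x ^ 2 + b * x + c) ^ 2 = x ^ 2 + b * x + c := sq_sqrt hq.le
  rw [hpow]
  set s := √(x ^ 2 + b * x + c)
  rw [← hsq]
  field_simp
  linear_combination 16 * hsq

theorem div_two_sqrt_quadratic_lt_one (hdisc : b ^ 2 < 4 * c) (x : ℝ) :
    (2 * x + b) / (2 * √(x ^ 2 + b * x + c)) < 1 := by
  have hq := quadratic_pos hdisc x
  have hs : 0 < √(x ^ 2 + b * x + c) := sqrt_pos.2 hq
  have hsq : √(x ^ 2 + b * x + c) ^ 2 = x ^ 2 + b * x + c := sq_sqrt hq.le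
  rw [div_lt_one (by positivity)]
  nlinarith

end SqrtQuadratic

theorem nbp_numerator_convex_nonincreasing_general (lam r₀ : ℝ)
    (hlam : 0 < lam) (hlamr : lam < r₀)
    (N : ℝ → ℝ)
    (hN : ∀ κ, N κ = -κ + Real.sqrt (κ ^ 2 + 4 * lam * (r₀ - κ))) :
    (∀ κ ∈ Set.Ioo (0:ℝ) r₀,
        deriv (deriv N) κ = 4 * lam * (r₀ - lam) / (κ ^ 2 + 4 * lam * (r₀ - κ)) ^ ((3:ℝ)/2) ∧
        0 < deriv (deriv N) κ ∧
        deriv N κ = (2 * κ - 4 * lam) / (2 * Real.sqrt (κ ^ 2 + 4 * lam * (r₀ - κ))) - 1 ∧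
        deriv N κ ≤ 0) ∧
    StrictConvexOn ℝ (Set.Ioo 0 r₀) N ∧
    AntitoneOn N (Set.Ioo 0 r₀) := by
  have hquad (κ : ℝ) : κ ^ 2 + 4 * lam * (r₀ - κ) = κ ^ 2 + -4 * lam * κ + 4 * lam * r₀ := by
    ring
  have hdisc : (-4 * lam) ^ 2 < 4 * (4 * lam * r₀) := by nlinarith
  have hNeq : N = fun κ => -κ + √(κ ^ 2 + -4 * lam * κ + 4 * lam * r₀) := by
    funext κ
    rw [hN, hquad]
  have hN' (κ : ℝ) : HasDerivAt N
      ((2 * κ + -4 * lam) / (2 * √(κ ^ 2 + -4 * lam * κ + 4 * lam * r₀)) - 1) κ :=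
    hNeq ▸ ((hasDerivAt_id' κ).fun_neg.fun_add
      (hasDerivAt_sqrt_quadratic (quadratic_pos hdisc κ).ne')).congr_deriv (by ring)
  have hN'' (κ : ℝ) : HasDerivAt (deriv N)
      (4 * lam * (r₀ - lam) / (κ ^ 2 + 4 * lam * (r₀ - κ)) ^ ((3:ℝ)/2)) κ := by
    rw [funext fun κ => (hN' κ).deriv, hquad]
    exact ((hasDerivAt_deriv_sqrt_quadratic hdisc κ).sub_const 1).congr_deriv (by ring)
  have hN''_pos (κ : ℝ) : 0 < deriv (deriv N) κ := by
    have := quadratic_pos hdisc κ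
    have : 0 < r₀ - lam := by linarith
    rw [(hN'' κ).deriv, hquad]
    positivity
  have hN'_neg (κ : ℝ) : deriv N κ < 0 := by
    rw [(hN' κ).deriv]
    linarith [div_two_sqrt_quadratic_lt_one hdisc κ]
  refine ⟨fun κ _ => ⟨(hN'' κ).deriv, hN''_pos κ, ?_, (hN'_neg κ).le⟩, ?_, ?_⟩
  · rw [(hN' κ).deriv, hquad]
    ring_nf
  · have hcont : Continuous N := continuous_iff_continuousAt.2 fun κ => (hN' κ).continuousAt
    exact (strictConvexOn_univ_of_deriv2_pos hcont hN''_pos).subset (Set.subset_univ _)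
      (convex_Ioo 0 r₀)
  · exact (strictAnti_of_deriv_neg hN'_neg).antitone.antitoneOn _

theorem nbp_numerator_convex_nonincreasing (lam r₀ : ℝ)
    (hlam : 0 < lam) (hr₀ : 0 < r₀) (hlamr : lam < r₀)
    (N : ℝ → ℝ)
    (hN : ∀ κ, N κ = -κ + Real.sqrt (κ ^ 2 + 4 * lam * (r₀ - κ))) :
    (∀ κ ∈ Set.Ioo (0:ℝ) r₀,
        deriv (deriv N) κ = 4 * lam * (r₀ - lam) / (κ ^ 2 + 4 * lam * (r₀ - κ)) ^ ((3:ℝ)/2) ∧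
        0 < deriv (deriv N) κ ∧
        deriv N κ = (2 * κ - 4 * lam) / (2 * Real.sqrt (κ ^ 2 + 4 * lam * (r₀ - κ))) - 1 ∧
        deriv N κ ≤ 0) ∧
    StrictConvexOn ℝ (Set.Ioo 0 r₀) N ∧
    AntitoneOn N (Set.Ioo 0 r₀) :=
  nbp_numerator_convex_nonincreasing_general lam r₀ hlam hlamr N hN
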